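/- arXiv:0905.3395 — 2 statements merged into one kernel-verified Lean document; each statement's English description precedes it below -/
import Mathlib

section
/- Let G be a first-countable topological group, Γ ⊆ G a subgroup, and μ a probability measure on Γ\G that is invariant under the right G-action (Γg)·h = Γ(gh). Let n ≥ 0 and let f : G^{n+1} → ℝ be a bounded continuous Γ-invariant function. Then the transfer f̄ : G^{n+1} → ℝ is continuous. -/
open MeasureTheory

section Setup

variable {G : Type*} [Group G] [TopologicalSpace G] [IsTopologicalGroup G]

/-- The space `Γ\G` of right cosets, with the quotient topology. -/
abbrev RightCosets (Γ : Subgroup G) : Type _ := Quotient (QuotientGroup.rightRel Γ)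

/-- `Γ\G` carries the Borel σ-algebra of the quotient topology. -/
instance (Γ : Subgroup G) : MeasurableSpace (RightCosets Γ) := borel _

instance (Γ : Subgroup G) : BorelSpace (RightCosets Γ) := ⟨rfl⟩

/-- The right `G`-action on `Γ\G`, `(Γg) · h = Γ(gh)`. -/
def rmul (Γ : Subgroup G) (h : G) : RightCosets Γ → RightCosets Γ :=
  Quotient.map' (· * h) (fun a b hab => by
    rw [QuotientGroup.rightRel_apply] at *
    simpa [mul_assoc] using hab)

end Setup

/-- if `G` is first countable, then the transfer `f̄` of a bounded
continuous `Γ`-invariant function `f : G^{n+1} → ℝ` is continuous. -/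
theorem statement5 {G : Type*} [Group G] [TopologicalSpace G] [IsTopologicalGroup G]
    [FirstCountableTopology G]
    (Γ : Subgroup G) (μ : Measure (RightCosets Γ)) [IsProbabilityMeasure μ]
    (hμ : ∀ h : G, μ.map (rmul Γ h) = μ)
    (n : ℕ) (f : (Fin (n + 1) → G) → ℝ)
    (hf_cont : Continuous f)
    (hf_bdd : ∃ C : ℝ, ∀ t, |f t| ≤ C)
    (hf_inv : ∀ γ ∈ Γ, ∀ t : Fin (n + 1) → G, f (fun i => γ * t i) = f t)
    (F : (Fin (n + 1) → G) → RightCosets Γ → ℝ)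
    (hF : ∀ (t : Fin (n + 1) → G) (g : G),
      F t (Quotient.mk _ g) = f (fun i => g * t i)) :
    Continuous fun t : Fin (n + 1) → G => ∫ x, F t x ∂μ := by
  obtain ⟨C, hC⟩ := hf_bdd
  have hFcont : ∀ t, Continuous (F t) := by
    intro t
    rw [continuous_coinduced_dom]
    show Continuous fun g : G => F t (Quotient.mk _ g)
    simp only [hF]
    exact hf_cont.comp (continuous_pi fun i => continuous_mul_right _)
  have hFbdd : ∀ t x, |F t x| ≤ C := by
    intro t x
    induction x using Quotient.inductionOn with
    | h g => rw [hF]; exact hC _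
  apply SeqContinuous.continuous
  intro u t hu
  apply MeasureTheory.tendsto_integral_of_dominated_convergence (fun _ => C)
  · intro k
    exact (hFcont (u k)).aestronglyMeasurable
  · exact MeasureTheory.integrable_const C
  · intro k
    filter_upwards with x
    simpa [Real.norm_eq_abs] using hFbdd (u k) x
  · filter_upwards with x
    induction x using Quotient.inductionOn with
    | h g =>
      simp only [hF]
      have hcont : Continuous fun s : Fin (n+1) → G => f (fun i => g * s i) :=
        hf_cont.comp (continuous_pi fun i => (continuous_const.mul (continuous_apply i) : Continuous fun s : Fin (n+1) → G => g * s i))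
      exact (hcont.tendsto t).comp hu
end

section
/- Let A be a Lie algebra over ℂ, regarded also as a Lie algebra over ℝ by restriction of scalars. Let g ⊆ A be an ℝ-Lie subalgebra with g ∩ i·g = {0}, and let h ⊆ g be an ℝ-Lie subalgebra. Suppose the complex Lie subalgebra h_ℂ of A whose underlying set is span_ℂ(h) is a Cartan subalgebra of A. Then h is a Cartan subalgebra of the real Lie algebra g; that is, h is a nilpotent Lie algebra and h equals its own normalizer in g: {x ∈ g : [x, y] ∈ h for all y ∈ h} = h. (This is the Lie-algebraic content of the statement that a semisimple Lie group whose Lie algebra admits a compact Cartan subalgebra has compact dual of the same rank as its maximal compact subgroup.) -/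
open Pointwise

/-- A complex Lie algebra is a real Lie algebra by restriction of scalars. -/
instance LieAlgebra.complexToReal {A : Type*} [LieRing A] [LieAlgebra ℂ A] :
    LieAlgebra ℝ A where
  lie_smul t x y := lie_smul (t : ℂ) x y

lemma lcs_real_le {L : Type*} [LieRing L] [LieAlgebra ℂ L] (k : ℕ) :
    ∀ x ∈ LieModule.lowerCentralSeries ℝ L L k, x ∈ LieModule.lowerCentralSeries ℂ L L k := by
  induction k with
  | zero => intro x _; trivial
  | succ k ih =>
    intro x hx
    rw [LieModule.lowerCentralSeries_succ, ← LieSubmodule.mem_toSubmodule,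
      LieSubmodule.lieIdeal_oper_eq_linear_span'] at hx ⊢
    refine Submodule.span_induction ?_ ?_ ?_ ?_ hx
    · rintro z ⟨a, -, b, hb, rfl⟩
      exact Submodule.subset_span ⟨a, trivial, b, ih b hb, rfl⟩
    · exact Submodule.zero_mem _
    · intro a b _ _ ha hb; exact Submodule.add_mem _ ha hb
    · intro r a _ ha
      rw [← Complex.coe_smul]
      exact Submodule.smul_mem _ _ ha

lemma isNilpotent_real_of_complex {L : Type*} [LieRing L] [LieAlgebra ℂ L]
    (hn : LieModule.IsNilpotent L L) : LieModule.IsNilpotent L L := by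
  obtain ⟨k, hk⟩ := (LieModule.isNilpotent_iff ℂ L L).mp hn
  refine (LieModule.isNilpotent_iff ℝ L L).mpr ⟨k, ?_⟩
  rw [eq_bot_iff]
  intro x hx
  have := lcs_real_le k x hx
  rw [hk] at this
  simpa using this

lemma span_decomp {A : Type*} [LieRing A] [LieAlgebra ℂ A] (h : LieSubalgebra ℝ A) :
    ∀ x ∈ Submodule.span ℂ (h : Set A), ∃ a ∈ h, ∃ b ∈ h, x = a + Complex.I • b := by
  intro x hx
  refine Submodule.span_induction ?_ ?_ ?_ ?_ hx
  · intro y hy; exact ⟨y, hy, 0, h.zero_mem, by simp⟩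
  · exact ⟨0, h.zero_mem, 0, h.zero_mem, by simp⟩
  · rintro u v - - ⟨a, ha, b, hb, rfl⟩ ⟨c, hc, d, hd, rfl⟩
    exact ⟨a + c, h.add_mem ha hc, b + d, h.add_mem hb hd, by rw [smul_add]; abel⟩
  · rintro c u - ⟨a, ha, b, hb, rfl⟩
    refine ⟨c.re • a - c.im • b, sub_mem (h.smul_mem _ ha) (h.smul_mem _ hb),
      c.im • a + c.re • b, add_mem (h.smul_mem _ ha) (h.smul_mem _ hb), ?_⟩
    simp only [← Complex.coe_smul]
    match_scalars <;> simp [Complex.ext_iff]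

/-- let `A` be a complex Lie algebra, `g ⊆ A` a real Lie subalgebra with
`g ∩ i·g = {0}`, and `h ⊆ g` a real Lie subalgebra.  If the complex Lie subalgebra `h_ℂ`
of `A` with underlying set `span_ℂ(h)` is a Cartan subalgebra of `A`, then `h` is a Cartan
subalgebra of `g`: `h` is nilpotent and `{x ∈ g : [x, y] ∈ h for all y ∈ h} = h`. -/
theorem statement10 {A : Type*} [LieRing A] [LieAlgebra ℂ A]
    (g h : LieSubalgebra ℝ A) (hhg : h ≤ g)
    (hg : (g : Set A) ∩ (Complex.I • (g : Set A)) = {0})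
    (hC : LieSubalgebra ℂ A)
    (hC_carrier : (hC : Set A) = (Submodule.span ℂ (h : Set A) : Set A))
    (hC_cartan : hC.IsCartanSubalgebra) :
    LieModule.IsNilpotent h h ∧
    {x : A | x ∈ g ∧ ∀ y ∈ h, ⁅x, y⁆ ∈ h} = (h : Set A) := by
  have hmem : ∀ x ∈ h, x ∈ hC := by
    intro x hx
    have : x ∈ (hC : Set A) := by
      rw [hC_carrier]; exact Submodule.subset_span hx
    exact this
  constructor
  · -- nilpotency
    have hnC : LieModule.IsNilpotent hC hC :=
      isNilpotent_real_of_complex hC_cartan.nilpotent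
    let f : h →ₗ⁅ℝ⁆ hC :=
      { toFun := fun x => ⟨x.1, hmem x.1 x.2⟩
        map_add' := fun x y => rfl
        map_smul' := fun r x => rfl
        map_lie' := fun {x y} => rfl }
    have hinj : Function.Injective f := by
      intro x y hxy
      have h2 : ((f x : hC) : A) = ((f y : hC) : A) := congrArg Subtype.val hxy
      exact Subtype.ext h2
    exact hinj.lieAlgebra_isNilpotent
  · -- self-normalizing
    ext x
    simp only [Set.mem_setOf_eq, SetLike.mem_coe]
    constructor
    · rintro ⟨hxg, hxn⟩
      -- x is in the normalizer of hC
      have hxC : x ∈ hC := by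
        rw [← hC_cartan.self_normalizing]
        rw [LieSubalgebra.mem_normalizer_iff]
        intro z hz
        rw [← SetLike.mem_coe, hC_carrier] at hz ⊢
        refine Submodule.span_induction ?_ ?_ ?_ ?_ hz
        · intro y hy; exact Submodule.subset_span (hxn y hy)
        · simp
        · intro a b _ _ ha hb; rw [lie_add]; exact Submodule.add_mem _ ha hb
        · intro c a _ ha; rw [lie_smul]; exact Submodule.smul_mem _ _ ha
      rw [← SetLike.mem_coe, hC_carrier] at hxC
      obtain ⟨a, ha, b, hb, rfl⟩ := span_decomp h x hxC
      have hib : Complex.I • b ∈ (g : Set A) ∩ (Complex.I • (g : Set A)) := by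
        constructor
        · have : (a + Complex.I • b) - a ∈ g := g.sub_mem hxg (hhg ha)
          simpa using this
        · exact ⟨b, hhg hb, rfl⟩
      rw [hg] at hib
      simp only [Set.mem_singleton_iff] at hib
      rw [hib, add_zero]
      exact ha
    · intro hx
      exact ⟨hhg hx, fun y hy => h.lie_mem hx hy⟩
end
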